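/- Algebraic reformulation of the sufficient condition: For every β ∈ [0,1], the inequality −β ⟪g, d⟫ + (1 − β) ξ ‖g‖² ≥ ε (β ‖g‖ ‖d‖ + (1 − β) ξ ‖g‖²) holds if and only if β (ρ + π) ≤ ρ, where ρ = ξ (1 − ε) and π = ⟪g, d⟫ / ‖g‖² + ε ‖d‖ / ‖g‖. Consequently, when the violation hypothesis −⟪g, d⟫ < ε ‖g‖ ‖d‖ holds (so that ρ > 0 and π > 0), the inequality holds if and only if β ≤ β̂ = ρ / (ρ + π), and β̂ < 1. -/

import Mathlib

open scoped RealInnerProductSpace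

noncomputable def dvec {n : ℕ} (g d : EuclideanSpace ℝ (Fin n)) (ξ β : ℝ) :
    EuclideanSpace ℝ (Fin n) :=
  β • d - ((1 - β) * ξ) • g

noncomputable def rho (ξ ε : ℝ) : ℝ := ξ * (1 - ε)

noncomputable def piV {n : ℕ} (g d : EuclideanSpace ℝ (Fin n)) (ε : ℝ) : ℝ :=
  ⟪g, d⟫ / ‖g‖ ^ 2 + ε * ‖d‖ / ‖g‖

noncomputable def betahat {n : ℕ} (g d : EuclideanSpace ℝ (Fin n)) (ξ ε : ℝ) : ℝ :=
  rho ξ ε / (rho ξ ε + piV g d ε)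

lemma rho_pos {ξ ε : ℝ} (hξ : 0 < ξ) (hε : ε < 1) : 0 < rho ξ ε :=
  mul_pos hξ (sub_pos.mpr hε)

section
variable {n : ℕ} {g : EuclideanSpace ℝ (Fin n)} (d : EuclideanSpace ℝ (Fin n)) (ε : ℝ)

lemma piV_mul_norm_sq (hg : g ≠ 0) : piV g d ε * ‖g‖ ^ 2 = ⟪g, d⟫ + ε * ‖g‖ * ‖d‖ := by
  have : ‖g‖ ≠ 0 := norm_ne_zero_iff.mpr hg
  rw [piV]
  field_simp

variable {d ε}

lemma piV_pos (hg : g ≠ 0) (hviol : -⟪g, d⟫ < ε * ‖g‖ * ‖d‖) : 0 < piV g d ε := by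
  have hG : 0 < ‖g‖ ^ 2 := by positivity
  refine pos_of_mul_pos_left ?_ hG.le
  rw [piV_mul_norm_sq d ε hg]
  linarith

lemma sufficient_ineq_iff (ξ β : ℝ) (hg : g ≠ 0) :
    -β * ⟪g, d⟫ + (1 - β) * ξ * ‖g‖ ^ 2 ≥ ε * (β * ‖g‖ * ‖d‖ + (1 - β) * ξ * ‖g‖ ^ 2) ↔
      β * (rho ξ ε + piV g d ε) ≤ rho ξ ε := by
  have hG : 0 < ‖g‖ ^ 2 := by positivity
  have hscaled : β * (rho ξ ε + piV g d ε) * ‖g‖ ^ 2 =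
      β * rho ξ ε * ‖g‖ ^ 2 + β * (⟪g, d⟫ + ε * ‖g‖ * ‖d‖) := by
    rw [← piV_mul_norm_sq d ε hg]; ring
  rw [← mul_le_mul_iff_of_pos_right hG, hscaled, rho, ge_iff_le]
  constructor <;> intro h <;> linarith

end

/-- Algebraic reformulation of the sufficient condition: for β ∈ [0,1] the sufficient
inequality holds iff β (ρ + π) ≤ ρ; under the violation hypothesis (so ρ, π > 0) it
holds iff β ≤ β̂ = ρ/(ρ+π), and β̂ < 1. -/
theorem sufficient_condition_reformulation {n : ℕ} (g d : EuclideanSpace ℝ (Fin n))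
    (hind : LinearIndependent ℝ ![g, d]) (ε ξ : ℝ)
    (hε : ε ∈ Set.Ioo (0 : ℝ) 1) (hξ : 0 < ξ) :
    (∀ β ∈ Set.Icc (0 : ℝ) 1,
      (-β * ⟪g, d⟫ + (1 - β) * ξ * ‖g‖ ^ 2 ≥
          ε * (β * ‖g‖ * ‖d‖ + (1 - β) * ξ * ‖g‖ ^ 2) ↔
        β * (rho ξ ε + piV g d ε) ≤ rho ξ ε)) ∧
    (-⟪g, d⟫ < ε * ‖g‖ * ‖d‖ →
      (∀ β ∈ Set.Icc (0 : ℝ) 1,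
        (-β * ⟪g, d⟫ + (1 - β) * ξ * ‖g‖ ^ 2 ≥
            ε * (β * ‖g‖ * ‖d‖ + (1 - β) * ξ * ‖g‖ ^ 2) ↔
          β ≤ betahat g d ξ ε)) ∧
      betahat g d ξ ε < 1) := by
  have hg : g ≠ 0 := by simpa using hind.ne_zero 0
  refine ⟨fun β _ => sufficient_ineq_iff ξ β hg, fun hviol => ?_⟩
  have hπ := piV_pos hg hviol
  have hsum : 0 < rho ξ ε + piV g d ε := add_pos (rho_pos hξ hε.2) hπ
  refine ⟨fun β _ => ?_, ?_⟩
  · rw [sufficient_ineq_iff ξ β hg, betahat, le_div_iff₀ hsum]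
  · rw [betahat, div_lt_one hsum]
    exact lt_add_of_pos_right _ hπ
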